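/- arXiv:2405.10399 — 4 statements merged into one kernel-verified Lean document; each statement's English description precedes it below -/
import Mathlib

section
/- For every x in the probability simplex Δ^d, x·s(T) − ∫₀ᵀ p(t)·r(t) dt ≤ β⁻¹ ln d. In particular, the continuous-time regret of the follow-the-regularized-leader strategy p(t) is bounded by β⁻¹ ln d. -/
/-!
The potential `Φ t = β⁻¹ log ∑ₐ exp (β sₐ t)` (log-sum-exp of the cumulative reward) dominates
`x ⬝ s t` for every `x` in the simplex and equals `β⁻¹ log d` at `t = 0`. Its gradient is the
softmax `p`, so by convexity `Φ t₂ - Φ t₁ ≤ p t₂ ⬝ (s t₂ - s t₁) = ∫_{t₁}^{t₂} p t₂ ⬝ r`. Rewards in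
`[0, 1]` give `p t₂ ≤ exp (β (t₂ - t₁)) p t` for `t ∈ [t₁, t₂]`, so the increment of `Φ` is
`∫ p ⬝ r` up to an `o(t₂ - t₁)` error, and summing over ever finer partitions of `[0, T]` yields
`Φ T - Φ 0 ≤ ∫₀ᵀ p ⬝ r`.
-/

open MeasureTheory Real Finset Filter Topology

noncomputable section

section Softmax

variable {ι : Type*} [Fintype ι]

def logSumExp (β : ℝ) (v : ι → ℝ) : ℝ := β⁻¹ * log (∑ a, exp (β * v a))

def softmax (β : ℝ) (v : ι → ℝ) (a : ι) : ℝ := exp (β * v a) / ∑ c, exp (β * v c)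

theorem sum_exp_pos [Nonempty ι] (β : ℝ) (v : ι → ℝ) : 0 < ∑ a, exp (β * v a) :=
  sum_pos (fun _ _ => exp_pos _) univ_nonempty

theorem softmax_nonneg (β : ℝ) (v : ι → ℝ) (a : ι) : 0 ≤ softmax β v a :=
  div_nonneg (exp_pos _).le (sum_nonneg fun _ _ => (exp_pos _).le)

theorem sum_softmax [Nonempty ι] (β : ℝ) (v : ι → ℝ) : ∑ a, softmax β v a = 1 := by
  simp only [softmax]
  rw [← sum_div, div_self (sum_exp_pos β v).ne']

theorem continuous_softmax (β : ℝ) (a : ι) : Continuous fun v : ι → ℝ => softmax β v a :=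
  have : Nonempty ι := ⟨a⟩
  Continuous.div (by fun_prop) (by fun_prop) fun v => (sum_exp_pos β v).ne'

theorem logSumExp_zero (β : ℝ) :
    logSumExp β (0 : ι → ℝ) = β⁻¹ * log (Fintype.card ι) := by
  simp [logSumExp]

theorem le_logSumExp {β : ℝ} (hβ : 0 < β) (v : ι → ℝ) (a : ι) : v a ≤ logSumExp β v := by
  have : Nonempty ι := ⟨a⟩
  have hexp : exp (β * v a) ≤ ∑ c, exp (β * v c) :=
    single_le_sum (fun c _ => (exp_pos (β * v c)).le) (mem_univ a)
  rw [logSumExp, le_inv_mul_iff₀ hβ]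
  exact (le_log_iff_exp_le (sum_exp_pos β v)).2 hexp

theorem sum_mul_le_logSumExp {β : ℝ} (hβ : 0 < β) (v : ι → ℝ) {x : ι → ℝ}
    (hx : x ∈ stdSimplex ℝ ι) : ∑ a, x a * v a ≤ logSumExp β v :=
  calc ∑ a, x a * v a ≤ ∑ a, x a * logSumExp β v :=
        sum_le_sum fun a _ => mul_le_mul_of_nonneg_left (le_logSumExp hβ v a) (hx.1 a)
    _ = logSumExp β v := by rw [← sum_mul, hx.2, one_mul]

/-- The gradient inequality for the convex function `logSumExp β`, whose gradient at `w` is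
`softmax β w`; it is Jensen's inequality for `exp` with weights `softmax β w`. -/
theorem logSumExp_sub_le [Nonempty ι] {β : ℝ} (hβ : 0 < β) (v w : ι → ℝ) :
    logSumExp β w - logSumExp β v ≤ ∑ a, softmax β w a * (w a - v a) := by
  have hjensen := convexOn_exp.map_sum_le (t := univ) (w := softmax β w)
    (p := fun a => β * (v a - w a)) (fun a _ => softmax_nonneg β w a) (sum_softmax β w)
    (fun a _ => Set.mem_univ _)
  have hratio : ∑ a, softmax β w a • exp (β * (v a - w a)) =
      (∑ a, exp (β * v a)) / ∑ a, exp (β * w a) := by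
    rw [sum_div]
    refine sum_congr rfl fun a _ => ?_
    rw [smul_eq_mul, softmax, mul_sub, exp_sub]
    field_simp
  rw [hratio, ← le_log_iff_exp_le (div_pos (sum_exp_pos β v) (sum_exp_pos β w)),
    log_div (sum_exp_pos β v).ne' (sum_exp_pos β w).ne'] at hjensen
  simp only [smul_eq_mul] at hjensen
  rw [logSumExp, logSumExp, ← mul_sub, inv_mul_le_iff₀ hβ]
  have : ∑ a, softmax β w a * (β * (v a - w a)) =
      -(β * ∑ a, softmax β w a * (w a - v a)) := by
    rw [mul_sum, ← sum_neg_distrib]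
    exact sum_congr rfl fun a _ => by ring
  linarith

theorem softmax_le_exp_mul_softmax {β δ : ℝ} (hβ : 0 ≤ β) {v w : ι → ℝ} (hvw : v ≤ w)
    {a : ι} (hδ : w a ≤ v a + δ) : softmax β w a ≤ exp (β * δ) * softmax β v a := by
  have : Nonempty ι := ⟨a⟩
  have hnum : exp (β * w a) ≤ exp (β * δ) * exp (β * v a) := by
    rw [← exp_add, exp_le_exp]
    nlinarith
  have hden : ∑ c, exp (β * v c) ≤ ∑ c, exp (β * w c) :=
    sum_le_sum fun c _ => exp_le_exp.2 (mul_le_mul_of_nonneg_left (hvw c) hβ)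
  rw [softmax, softmax, ← mul_div_assoc]
  exact div_le_div₀ (by positivity) hnum (sum_exp_pos β v) hden

theorem sum_softmax_mul_le [Nonempty ι] {β δ : ℝ} (hβ : 0 ≤ β) (hδ : 0 ≤ δ)
    {v w r : ι → ℝ} (hvw : v ≤ w) (hwv : ∀ a, w a ≤ v a + δ)
    (hr : ∀ a, r a ∈ Set.Icc (0 : ℝ) 1) :
    ∑ a, softmax β w a * r a ≤ ∑ a, softmax β v a * r a + (exp (β * δ) - 1) := by
  have hexp : 0 ≤ exp (β * δ) - 1 := by
    rw [sub_nonneg]; exact one_le_exp (mul_nonneg hβ hδ)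
  have hle_one : ∑ a, softmax β v a * r a ≤ 1 :=
    calc ∑ a, softmax β v a * r a ≤ ∑ a, softmax β v a :=
          sum_le_sum fun a _ => mul_le_of_le_one_right (softmax_nonneg β v a) (hr a).2
      _ = 1 := sum_softmax β v
  calc ∑ a, softmax β w a * r a ≤ ∑ a, exp (β * δ) * softmax β v a * r a :=
        sum_le_sum fun a _ => mul_le_mul_of_nonneg_right
          (softmax_le_exp_mul_softmax hβ hvw (hwv a)) (hr a).1
    _ = ∑ a, softmax β v a * r a + (exp (β * δ) - 1) * ∑ a, softmax β v a * r a := by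
        simp only [mul_assoc, ← mul_sum]; ring
    _ ≤ ∑ a, softmax β v a * r a + (exp (β * δ) - 1) := by
        gcongr
        exact mul_le_of_le_one_right hexp hle_one

end Softmax

theorem IntervalIntegrable.mono_Icc {E : Type*} [NormedAddCommGroup E] {f : ℝ → E}
    {μ : Measure ℝ} {a b u v : ℝ} (hf : IntervalIntegrable f μ a b) (hu : u ∈ Set.Icc a b)
    (hv : v ∈ Set.Icc a b) : IntervalIntegrable f μ u v :=
  hf.mono_set (Set.uIcc_subset_uIcc (Set.Icc_subset_uIcc hu) (Set.Icc_subset_uIcc hv))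

section Telescoping

variable {F f ε : ℝ → ℝ} {a b : ℝ}

theorem sub_le_integral_add_of_uniform_partition (hab : a ≤ b)
    (hf : IntervalIntegrable f volume a b)
    (hF : ∀ t₁ t₂, a ≤ t₁ → t₁ ≤ t₂ → t₂ ≤ b →
      F t₂ - F t₁ ≤ (∫ t in t₁..t₂, f t) + (t₂ - t₁) * ε (t₂ - t₁))
    {n : ℕ} (hn : n ≠ 0) :
    F b - F a ≤ (∫ t in a..b, f t) + (b - a) * ε ((b - a) / n) := by
  set h := (b - a) / n
  have hnh : n * h = b - a := mul_div_cancel₀ _ (Nat.cast_ne_zero.2 hn)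
  have hh : 0 ≤ h := div_nonneg (sub_nonneg.2 hab) n.cast_nonneg
  set x : ℕ → ℝ := fun k => a + k * h
  have hx : ∀ k ≤ n, x k ∈ Set.Icc a b := fun k hk => by
    have hkh : (k : ℝ) * h ≤ n * h := by gcongr
    exact ⟨le_add_of_nonneg_right (mul_nonneg k.cast_nonneg hh), by simp only [x]; linarith⟩
  have hx0 : x 0 = a := by simp [x]
  have hxn : x n = b := by simp only [x, hnh]; ring_nf
  have hstep : ∀ k, x (k + 1) - x k = h := fun k => by simp only [x]; push_cast; ring
  calc F b - F a = ∑ k ∈ range n, (F (x (k + 1)) - F (x k)) := by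
        rw [sum_range_sub (fun k => F (x k)), hxn, hx0]
    _ ≤ ∑ k ∈ range n, ((∫ t in x k..x (k + 1), f t) + h * ε h) :=
        sum_le_sum fun k hk => by
          have hk := mem_range.1 hk
          simpa only [hstep] using
            hF _ _ (hx k hk.le).1 (by linarith [hstep k, hh]) (hx (k + 1) hk).2
    _ = (∫ t in a..b, f t) + (b - a) * ε h := by
        rw [sum_add_distrib, intervalIntegral.sum_integral_adjacent_intervals fun k hk =>
            hf.mono_Icc (hx k hk.le) (hx (k + 1) hk),
          hx0, hxn, sum_const, card_range, nsmul_eq_mul, ← mul_assoc, hnh]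

theorem sub_le_integral_of_sub_le_integral_add (hab : a < b)
    (hf : IntervalIntegrable f volume a b) (hε : Tendsto ε (𝓝[>] 0) (𝓝 0))
    (hF : ∀ t₁ t₂, a ≤ t₁ → t₁ ≤ t₂ → t₂ ≤ b →
      F t₂ - F t₁ ≤ (∫ t in t₁..t₂, f t) + (t₂ - t₁) * ε (t₂ - t₁)) :
    F b - F a ≤ ∫ t in a..b, f t := by
  have hmesh : Tendsto (fun n : ℕ => (b - a) / n) atTop (𝓝[>] 0) :=
    tendsto_nhdsWithin_iff.2 ⟨tendsto_const_div_atTop_nhds_zero_nat _,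
      eventually_atTop.2 ⟨1, fun n hn => div_pos (sub_pos.2 hab) (by exact_mod_cast hn)⟩⟩
  have herr : Tendsto (fun n : ℕ => (∫ t in a..b, f t) + (b - a) * ε ((b - a) / n)) atTop
      (𝓝 (∫ t in a..b, f t)) := by
    simpa using ((hε.comp hmesh).const_mul (b - a)).const_add (∫ t in a..b, f t)
  exact ge_of_tendsto herr (eventually_atTop.2 ⟨1, fun n hn =>
    sub_le_integral_add_of_uniform_partition hab.le hf hF (by omega)⟩)

end Telescoping

section CumulativeReward

variable {ι : Type*} {r : ℝ → ι → ℝ} {T : ℝ}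

def cumulativeReward (r : ℝ → ι → ℝ) (t : ℝ) : ι → ℝ := fun a => ∫ z in (0 : ℝ)..t, r z a

theorem cumulativeReward_sub_cumulativeReward
    (hr_int : ∀ a, IntervalIntegrable (fun t => r t a) volume 0 T) {u v : ℝ}
    (hu : u ∈ Set.Icc 0 T) (hv : v ∈ Set.Icc 0 T) (a : ι) :
    cumulativeReward r v a - cumulativeReward r u a = ∫ t in u..v, r t a :=
  have h0 : (0 : ℝ) ∈ Set.Icc 0 T := Set.left_mem_Icc.2 (hu.1.trans hu.2)
  intervalIntegral.integral_interval_sub_left ((hr_int a).mono_Icc h0 hv)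
    ((hr_int a).mono_Icc h0 hu)

theorem cumulativeReward_sub_mem_Icc
    (hr_int : ∀ a, IntervalIntegrable (fun t => r t a) volume 0 T)
    (hr_range : ∀ t ∈ Set.Icc (0 : ℝ) T, ∀ a, r t a ∈ Set.Icc (0 : ℝ) 1)
    {u v : ℝ} (hu : u ∈ Set.Icc 0 T) (hv : v ∈ Set.Icc 0 T) (huv : u ≤ v) (a : ι) :
    cumulativeReward r v a - cumulativeReward r u a ∈ Set.Icc 0 (v - u) := by
  have hr : ∀ t ∈ Set.Icc u v, r t a ∈ Set.Icc (0 : ℝ) 1 := fun t ht =>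
    hr_range t ⟨hu.1.trans ht.1, ht.2.trans hv.2⟩ a
  rw [cumulativeReward_sub_cumulativeReward hr_int hu hv]
  refine ⟨intervalIntegral.integral_nonneg huv fun t ht => (hr t ht).1, ?_⟩
  simpa using intervalIntegral.integral_mono_on huv ((hr_int a).mono_Icc hu hv)
    intervalIntegrable_const fun t ht => (hr t ht).2

theorem continuousOn_cumulativeReward
    (hr_int : ∀ a, IntervalIntegrable (fun t => r t a) volume 0 T) :
    ContinuousOn (cumulativeReward r) (Set.uIcc 0 T) :=
  continuousOn_pi.2 fun a =>
    intervalIntegral.continuousOn_primitive_interval' (hr_int a) Set.left_mem_uIcc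

theorem intervalIntegrable_sum_softmax_mul [Fintype ι]
    (hr_int : ∀ a, IntervalIntegrable (fun t => r t a) volume 0 T) (β : ℝ) :
    IntervalIntegrable (fun t => ∑ a, softmax β (cumulativeReward r t) a * r t a) volume 0 T := by
  simpa only [sum_fn] using IntervalIntegrable.sum univ
    (f := fun a t => softmax β (cumulativeReward r t) a * r t a) fun a _ =>
    (hr_int a).continuousOn_mul
      ((continuous_softmax β a).comp_continuousOn (continuousOn_cumulativeReward hr_int))

theorem logSumExp_cumulativeReward_sub_le [Fintype ι] [Nonempty ι] {β : ℝ} (hβ : 0 < β)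
    (hr_int : ∀ a, IntervalIntegrable (fun t => r t a) volume 0 T)
    (hr_range : ∀ t ∈ Set.Icc (0 : ℝ) T, ∀ a, r t a ∈ Set.Icc (0 : ℝ) 1)
    {t₁ t₂ : ℝ} (h₁ : t₁ ∈ Set.Icc 0 T) (h₂ : t₂ ∈ Set.Icc 0 T) (h₁₂ : t₁ ≤ t₂) :
    logSumExp β (cumulativeReward r t₂) - logSumExp β (cumulativeReward r t₁) ≤
      (∫ t in t₁..t₂, ∑ a, softmax β (cumulativeReward r t) a * r t a) +
        (t₂ - t₁) * (exp (β * (t₂ - t₁)) - 1) := by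
  set q := softmax β (cumulativeReward r t₂)
  have hr : ∀ a, IntervalIntegrable (fun t => r t a) volume t₁ t₂ := fun a =>
    (hr_int a).mono_Icc h₁ h₂
  have hp : IntervalIntegrable (fun t => ∑ a, softmax β (cumulativeReward r t) a * r t a)
      volume t₁ t₂ :=
    (intervalIntegrable_sum_softmax_mul hr_int β).mono_Icc h₁ h₂
  -- Freezing the weights at `q` overpays by at most a factor `exp (β * (t₂ - t₁))`.
  have hfreeze : ∀ t ∈ Set.Icc t₁ t₂, ∑ a, q a * r t a ≤
      ∑ a, softmax β (cumulativeReward r t) a * r t a + (exp (β * (t₂ - t₁)) - 1) := by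
    intro t ht
    have ht' : t ∈ Set.Icc 0 T := ⟨h₁.1.trans ht.1, ht.2.trans h₂.2⟩
    have hinc := cumulativeReward_sub_mem_Icc hr_int hr_range ht' h₂ ht.2
    refine sum_softmax_mul_le hβ.le (sub_nonneg.2 h₁₂) (fun a => sub_nonneg.1 (hinc a).1)
      (fun a => ?_) (hr_range t ht')
    linarith [(hinc a).2, ht.1]
  calc logSumExp β (cumulativeReward r t₂) - logSumExp β (cumulativeReward r t₁)
      ≤ ∑ a, q a * (cumulativeReward r t₂ a - cumulativeReward r t₁ a) :=
        logSumExp_sub_le hβ _ _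
    _ = ∫ t in t₁..t₂, ∑ a, q a * r t a := by
        rw [intervalIntegral.integral_finsetSum fun a _ => (hr a).const_mul (q a)]
        refine sum_congr rfl fun a _ => ?_
        rw [cumulativeReward_sub_cumulativeReward hr_int h₁ h₂,
          intervalIntegral.integral_const_mul]
    _ ≤ ∫ t in t₁..t₂, (∑ a, softmax β (cumulativeReward r t) a * r t a +
          (exp (β * (t₂ - t₁)) - 1)) := by
        refine intervalIntegral.integral_mono_on h₁₂ ?_ (hp.add intervalIntegrable_const) hfreeze
        simpa only [sum_fn] using IntervalIntegrable.sum univ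
          (f := fun a t => q a * r t a) fun a _ => (hr a).const_mul (q a)
    _ = _ := by
        rw [intervalIntegral.integral_add hp intervalIntegrable_const,
          intervalIntegral.integral_const, smul_eq_mul]

end CumulativeReward

/-- Continuous-time online linear optimization: for every `x` in the probability simplex,
`x ⬝ s(T) - ∫₀ᵀ p(t) ⬝ r(t) dt ≤ β⁻¹ ln d`, where `s(t) = ∫₀ᵗ r(z) dz` is the cumulative
reward and `p(t)` is the follow-the-regularized-leader (softmax) strategy. -/
theorem continuous_time_ftrl_regret_bound
    (d : ℕ) (hd : 1 ≤ d) (T : ℝ) (hT : 0 < T) (β : ℝ) (hβ : 0 < β)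
    (r : ℝ → Fin d → ℝ)
    (hr_int : ∀ a, IntervalIntegrable (fun t => r t a) MeasureTheory.volume 0 T)
    (hr_range : ∀ t ∈ Set.Icc (0 : ℝ) T, ∀ a, r t a ∈ Set.Icc (0 : ℝ) 1)
    (s : ℝ → Fin d → ℝ)
    (hs : ∀ t, ∀ a, s t a = ∫ z in (0 : ℝ)..t, r z a)
    (p : ℝ → Fin d → ℝ)
    (hp : ∀ t, ∀ a, p t a = Real.exp (β * s t a) / ∑ c, Real.exp (β * s t c))
    (x : Fin d → ℝ) (hx : x ∈ stdSimplex ℝ (Fin d)) :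
    (∑ a, x a * s T a) - (∫ t in (0 : ℝ)..T, ∑ a, p t a * r t a) ≤ β⁻¹ * Real.log d := by
  have : Nonempty (Fin d) := Fin.pos_iff_nonempty.1 hd
  obtain rfl : s = cumulativeReward r := funext fun t => funext (hs t)
  obtain rfl : p = fun t => softmax β (cumulativeReward r t) := funext fun t => funext (hp t)
  have hε : Tendsto (fun h => exp (β * h) - 1) (𝓝[>] 0) (𝓝 0) := by
    have hcont : Continuous fun h => exp (β * h) - 1 := by fun_prop
    simpa using (hcont.tendsto 0).mono_left nhdsWithin_le_nhds
  have hpotential := sub_le_integral_of_sub_le_integral_add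
    (F := fun t => logSumExp β (cumulativeReward r t)) hT
    (intervalIntegrable_sum_softmax_mul hr_int β) hε fun t₁ t₂ h₁ h₁₂ h₂ =>
      logSumExp_cumulativeReward_sub_le hβ hr_int hr_range ⟨h₁, h₁₂.trans h₂⟩
        ⟨h₁.trans h₁₂, h₂⟩ h₁₂
  have hzero : cumulativeReward r 0 = 0 := funext fun a => intervalIntegral.integral_same
  simp only [hzero, logSumExp_zero, Fintype.card_fin] at hpotential
  linarith [sum_mul_le_logSumExp hβ (cumulativeReward r T) hx]

end
end

section
/- Let Σ be the d×d matrix with entries (r_a²/p_a) δ_{ab} − r_a r_b and H the d×d matrix with entries δ_{ab} p_a − p_a p_b. Then tr(Σ H) ≤ Σ_a r_a² ≤ d. (This is the key quadratic-variation bound in the continuous-time adversarial bandit regret analysis.) -/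
/-!
Writing `Σ = diag(r²/p) - r rᵀ` and `H = diag(p) - p pᵀ` and expanding the product,
`tr(Σ H) = ∑ r² - 2 ∑ r² p + (r ⬝ p)²`. Since `p` is a probability vector, Jensen
(Cauchy–Schwarz) gives `(r ⬝ p)² ≤ ∑ r² p`, hence `tr(Σ H) ≤ ∑ r² - ∑ r² p ≤ ∑ r²`.
-/

open Matrix

namespace Matrix

variable {ι R : Type*} [Fintype ι]

theorem sq_dotProduct_le_sum_sq_mul [CommRing R] [LinearOrder R] [IsStrictOrderedRing R]
    (x p : ι → R) (hp : ∀ i, 0 ≤ p i) (hp_sum : ∑ i, p i = 1) :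
    (x ⬝ᵥ p) ^ 2 ≤ ∑ i, x i ^ 2 * p i := by
  simpa [dotProduct, hp_sum] using Finset.sum_sq_le_sum_mul_sum_of_sq_le_mul Finset.univ
    (r := fun i => x i * p i) (fun i _ => mul_nonneg (sq_nonneg (x i)) (hp i))
    (fun i _ => hp i) (fun i _ => (by ring : _ = _).le)

variable [DecidableEq ι]

theorem trace_diagonal_sub_vecMulVec_mul_diagonal_sub_vecMulVec [CommRing R] (u x p : ι → R) :
    ((diagonal u - vecMulVec x x) * (diagonal p - vecMulVec p p)).trace =
      ∑ i, u i * p i * (1 - p i) - ∑ i, x i ^ 2 * p i + (x ⬝ᵥ p) ^ 2 := by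
  rw [sub_mul, mul_sub, mul_sub, vecMulVec_mul_vecMulVec, diagonal_mul_diagonal, mul_vecMulVec,
    vecMulVec_mul]
  simp only [trace_sub, trace_diagonal, trace_vecMulVec, dotProduct_smul, smul_eq_mul]
  simp only [dotProduct, mulVec_diagonal, vecMul_diagonal, mul_sub, Finset.sum_sub_distrib]
  ring_nf

theorem trace_diagonal_sq_div_sub_vecMulVec_mul_le [Field R] [LinearOrder R]
    [IsStrictOrderedRing R] (r p : ι → R) (hp_pos : ∀ i, 0 < p i) (hp_sum : ∑ i, p i = 1) :
    ((diagonal (fun i => r i ^ 2 / p i) - vecMulVec r r) * (diagonal p - vecMulVec p p)).trace ≤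
      ∑ i, r i ^ 2 := by
  have hcancel (i : ι) : r i ^ 2 / p i * p i * (1 - p i) = r i ^ 2 - r i ^ 2 * p i := by
    rw [div_mul_cancel₀ _ (hp_pos i).ne', mul_one_sub]
  have hjensen := sq_dotProduct_le_sum_sq_mul r p (fun i => (hp_pos i).le) hp_sum
  have hnonneg : 0 ≤ ∑ i, r i ^ 2 * p i :=
    Finset.sum_nonneg fun i _ => mul_nonneg (sq_nonneg _) (hp_pos i).le
  rw [trace_diagonal_sub_vecMulVec_mul_diagonal_sub_vecMulVec]
  simp only [hcancel, Finset.sum_sub_distrib]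
  linarith

end Matrix

theorem bandit_quadratic_variation_trace_bound_general
    (d : ℕ)
    (r : Fin d → ℝ) (hr : ∀ a, r a ∈ Set.Icc (0 : ℝ) 1)
    (p : Fin d → ℝ) (hp_pos : ∀ a, 0 < p a) (hp_sum : ∑ a, p a = 1)
    (S H : Matrix (Fin d) (Fin d) ℝ)
    (hS : ∀ a b, S a b = (r a ^ 2 / p a) * (if a = b then 1 else 0) - r a * r b)
    (hH : ∀ a b, H a b = (if a = b then p a else 0) - p a * p b) :
    (S * H).trace ≤ ∑ a, r a ^ 2 ∧ (∑ a, r a ^ 2) ≤ d := by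
  have hS' : S = diagonal (fun a => r a ^ 2 / p a) - vecMulVec r r := by
    ext a b
    simp [hS, diagonal_apply, vecMulVec_apply]
  have hH' : H = diagonal p - vecMulVec p p := by
    ext a b
    simp [hH, diagonal_apply, vecMulVec_apply]
  subst hS' hH'
  refine ⟨trace_diagonal_sq_div_sub_vecMulVec_mul_le r p hp_pos hp_sum, ?_⟩
  calc ∑ a, r a ^ 2 ≤ ∑ _a : Fin d, (1 : ℝ) :=
        Finset.sum_le_sum fun a _ => pow_le_one₀ (hr a).1 (hr a).2
    _ = d := by simp

/-- Key quadratic-variation bound for the continuous-time adversarial bandit: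
with `Σ_{ab} = (r_a²/p_a) δ_{ab} - r_a r_b` and `H_{ab} = δ_{ab} p_a - p_a p_b`,
one has `tr(Σ H) ≤ ∑_a r_a² ≤ d` whenever `r ∈ [0,1]^d`. -/
theorem bandit_quadratic_variation_trace_bound
    (d : ℕ) (hd : 1 ≤ d)
    (r : Fin d → ℝ) (hr : ∀ a, r a ∈ Set.Icc (0 : ℝ) 1)
    (p : Fin d → ℝ) (hp_pos : ∀ a, 0 < p a) (hp_sum : ∑ a, p a = 1)
    (S H : Matrix (Fin d) (Fin d) ℝ)
    (hS : ∀ a b, S a b = (r a ^ 2 / p a) * (if a = b then 1 else 0) - r a * r b)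
    (hH : ∀ a b, H a b = (if a = b then p a else 0) - p a * p b) :
    (S * H).trace ≤ ∑ a, r a ^ 2 ∧ (∑ a, r a ^ 2) ≤ d :=
  bandit_quadratic_variation_trace_bound_general d r hr p hp_pos hp_sum S H hS hH
end

section
/- If |aᵀ r| ≤ 1 for every a ∈ 𝒜, then the second-moment matrix of the linear-bandit reward estimate is dominated in the Loewner order by Q⁻¹: Σ_{a∈𝒜} p_a Q⁻¹ a (aᵀ r)² aᵀ Q⁻¹ ⪯ Q⁻¹. -/
open Matrix

/-!
Symmetry of `Q` and `Q⁻¹ Q = 1` give `Q⁻¹ = Q⁻¹ Q Q⁻¹ = ∑ᵢ pᵢ (Q⁻¹aᵢ)(Q⁻¹aᵢ)ᵀ`. Subtracting the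
second-moment matrix therefore leaves `∑ᵢ pᵢ (1 - (aᵢᵀr)²) (Q⁻¹aᵢ)(Q⁻¹aᵢ)ᵀ`, a nonnegative
combination of rank-one positive semidefinite matrices.
-/

namespace Matrix

variable {n ι R : Type*} [Fintype ι]

theorem mul_vecMulVec_mul_transpose [Fintype n] [CommSemiring R] (M : Matrix n n R) (u v : n → R) :
    M * vecMulVec u v * Mᵀ = vecMulVec (M *ᵥ u) (M *ᵥ v) := by
  rw [mul_vecMulVec, vecMulVec_mul, vecMul_transpose]

theorem transpose_sum_smul_vecMulVec_self [CommSemiring R] (p : ι → R) (a : ι → n → R) :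
    (∑ i, p i • vecMulVec (a i) (a i))ᵀ = ∑ i, p i • vecMulVec (a i) (a i) := by
  simp only [transpose_sum, transpose_smul, transpose_vecMulVec]

theorem inv_eq_sum_smul_vecMulVec_mulVec_inv [Fintype n] [DecidableEq n] [CommRing R]
    (p : ι → R) (a : ι → n → R) {Q : Matrix n n R}
    (hQ : Q = ∑ i, p i • vecMulVec (a i) (a i)) (hQdet : IsUnit Q.det) :
    Q⁻¹ = ∑ i, p i • vecMulVec (Q⁻¹ *ᵥ a i) (Q⁻¹ *ᵥ a i) := by
  have hQinv_symm : Q⁻¹ᵀ = Q⁻¹ := by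
    rw [transpose_nonsing_inv, hQ, transpose_sum_smul_vecMulVec_self]
  calc Q⁻¹ = Q⁻¹ * Q * Q⁻¹ᵀ := by rw [nonsing_inv_mul Q hQdet, one_mul, hQinv_symm]
    _ = ∑ i, p i • vecMulVec (Q⁻¹ *ᵥ a i) (Q⁻¹ *ᵥ a i) := by
      conv_lhs => arg 1; arg 2; rw [hQ]
      simp only [Finset.mul_sum, Finset.sum_mul, Matrix.mul_smul, Matrix.smul_mul,
        mul_vecMulVec_mul_transpose]

theorem posSemidef_sum_smul_vecMulVec_self [Fintype n] [CommRing R] [PartialOrder R] [StarRing R]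
    [StarOrderedRing R] [TrivialStar R] {c : ι → R} (hc : ∀ i, 0 ≤ c i) (v : ι → n → R) :
    (∑ i, c i • vecMulVec (v i) (v i)).PosSemidef := by
  refine posSemidef_sum _ fun i _ => PosSemidef.smul ?_ (hc i)
  simpa only [star_trivial] using posSemidef_vecMulVec_self_star (v i)

end Matrix

theorem linear_bandit_second_moment_loewner_bound_general
    (d : ℕ)
    (ι : Type) [Fintype ι]
    (a : ι → Fin d → ℝ) (r : Fin d → ℝ)
    (hr : ∀ i, |a i ⬝ᵥ r| ≤ 1)
    (p : ι → ℝ) (hp_nonneg : ∀ i, 0 ≤ p i)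
    (Q : Matrix (Fin d) (Fin d) ℝ)
    (hQ : Q = ∑ i, p i • Matrix.vecMulVec (a i) (a i))
    (hQinv : IsUnit Q.det) :
    (Q⁻¹ - ∑ i, (p i * (a i ⬝ᵥ r) ^ 2) •
        Matrix.vecMulVec (Q⁻¹ *ᵥ a i) (Q⁻¹ *ᵥ a i)).PosSemidef := by
  have hdiff : Q⁻¹ - ∑ i, (p i * (a i ⬝ᵥ r) ^ 2) •
        vecMulVec (Q⁻¹ *ᵥ a i) (Q⁻¹ *ᵥ a i)
      = ∑ i, (p i * (1 - (a i ⬝ᵥ r) ^ 2)) • vecMulVec (Q⁻¹ *ᵥ a i) (Q⁻¹ *ᵥ a i) := by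
    conv_lhs => arg 1; rw [inv_eq_sum_smul_vecMulVec_mulVec_inv p a hQ hQinv]
    simp only [← Finset.sum_sub_distrib, ← sub_smul, mul_sub, mul_one]
  rw [hdiff]
  exact posSemidef_sum_smul_vecMulVec_self
    (fun i => mul_nonneg (hp_nonneg i) (sub_nonneg.2 (sq_le_one_iff_abs_le_one _ |>.2 (hr i)))) _

/-- If `|a_iᵀ r| ≤ 1` for every arm, then the second-moment matrix of the linear-bandit
reward estimate is dominated in the Loewner order by `Q⁻¹`:
`∑_i p_i Q⁻¹ a_i (a_iᵀ r)² a_iᵀ Q⁻¹ ⪯ Q⁻¹`, i.e., the difference is positive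
semidefinite. -/
theorem linear_bandit_second_moment_loewner_bound
    (d : ℕ) (hd : 1 ≤ d)
    (ι : Type) [Fintype ι]
    (a : ι → Fin d → ℝ) (r : Fin d → ℝ)
    (hr : ∀ i, |a i ⬝ᵥ r| ≤ 1)
    (p : ι → ℝ) (hp_nonneg : ∀ i, 0 ≤ p i) (hp_le : ∀ i, p i ≤ 1)
    (hp_sum : ∑ i, p i = 1)
    (Q : Matrix (Fin d) (Fin d) ℝ)
    (hQ : Q = ∑ i, p i • Matrix.vecMulVec (a i) (a i))
    (hQinv : IsUnit Q.det) :
    (Q⁻¹ - ∑ i, (p i * (a i ⬝ᵥ r) ^ 2) •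
        Matrix.vecMulVec (Q⁻¹ *ᵥ a i) (Q⁻¹ *ᵥ a i)).PosSemidef :=
  linear_bandit_second_moment_loewner_bound_general d ι a r hr p hp_nonneg Q hQ hQinv
end

section
/- If |aᵀ r| ≤ 1 for every a ∈ 𝒜, then tr( Aᵀ (diag(p) − p pᵀ) A · ( Σ_{a∈𝒜} p_a Q⁻¹ a (aᵀ r)² aᵀ Q⁻¹ − r rᵀ ) ) ≤ d, where A is the k×d matrix whose rows are the arm vectors aᵀ (k = |𝒜|), diag(p) is the k×k diagonal matrix with entries p_a, and Q = Aᵀ diag(p) A = Σ_{a∈𝒜} p_a a aᵀ is assumed invertible. (This is the key quadratic-variation bound in the continuous-time adversarial linear bandit regret analysis.) -/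
open Matrix

private lemma trace_mul_vecMulVec {d : ℕ} (M : Matrix (Fin d) (Fin d) ℝ) (x y : Fin d → ℝ) :
    (M * vecMulVec x y).trace = y ⬝ᵥ (M *ᵥ x) := by
  simp [trace, Matrix.mul_apply, vecMulVec_apply, mulVec, dotProduct, Finset.mul_sum]
  congr 1; ext i; congr 1; ext j; ring

private lemma quadformD {d k : ℕ} (A : Matrix (Fin k) (Fin d) ℝ) (p : Fin k → ℝ)
    (x : Fin d → ℝ) :
    x ⬝ᵥ ((Aᵀ * Matrix.diagonal p * A) *ᵥ x) = ∑ i, p i * (A i ⬝ᵥ x) ^ 2 := by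
  rw [← Matrix.mulVec_mulVec, ← Matrix.mulVec_mulVec]
  rw [Matrix.dotProduct_mulVec, Matrix.vecMul_transpose]
  set z := A *ᵥ x with hz
  have hzi : ∀ i, z i = A i ⬝ᵥ x := fun i => rfl
  simp [dotProduct, Matrix.mulVec_diagonal, hzi]
  congr 1; ext i; ring

private lemma quadformP {d k : ℕ} (A : Matrix (Fin k) (Fin d) ℝ) (p : Fin k → ℝ)
    (x : Fin d → ℝ) :
    x ⬝ᵥ ((Aᵀ * Matrix.vecMulVec p p * A) *ᵥ x) = (∑ i, p i * (A i ⬝ᵥ x)) ^ 2 := by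
  rw [← Matrix.mulVec_mulVec, ← Matrix.mulVec_mulVec]
  rw [Matrix.dotProduct_mulVec, Matrix.vecMul_transpose]
  set z := A *ᵥ x with hz
  have hz' : ∀ i, (A i ⬝ᵥ x) = z i := fun i => rfl
  simp only [hz']
  simp only [dotProduct, Matrix.mulVec, vecMulVec_apply, dotProduct]
  rw [sq, Finset.sum_mul]
  refine Finset.sum_congr rfl fun i _ => ?_
  rw [Finset.mul_sum, Finset.mul_sum]
  refine Finset.sum_congr rfl fun j _ => ?_
  ring

private lemma quadform {d k : ℕ} (A : Matrix (Fin k) (Fin d) ℝ) (p : Fin k → ℝ)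
    (x : Fin d → ℝ) :
    x ⬝ᵥ ((Aᵀ * (Matrix.diagonal p - Matrix.vecMulVec p p) * A) *ᵥ x) =
      (∑ i, p i * (A i ⬝ᵥ x) ^ 2) - (∑ i, p i * (A i ⬝ᵥ x)) ^ 2 := by
  have : Aᵀ * (Matrix.diagonal p - Matrix.vecMulVec p p) * A =
      Aᵀ * Matrix.diagonal p * A - Aᵀ * Matrix.vecMulVec p p * A := by
    rw [Matrix.mul_sub, Matrix.sub_mul]
  rw [this, Matrix.sub_mulVec, dotProduct_sub, quadformD, quadformP]

/-- Key quadratic-variation bound for the continuous-time adversarial linear bandit: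
with `A` the `k × d` matrix whose rows are the arm vectors, `Q = Aᵀ diag(p) A`
invertible, and `|a_iᵀ r| ≤ 1` for every arm, one has
`tr( Aᵀ (diag(p) - p pᵀ) A ( ∑_i p_i Q⁻¹ a_i (a_iᵀ r)² a_iᵀ Q⁻¹ - r rᵀ ) ) ≤ d`. -/
theorem linear_bandit_quadratic_variation_trace_bound
    (d k : ℕ) (hd : 1 ≤ d) (hk : 1 ≤ k)
    (A : Matrix (Fin k) (Fin d) ℝ) (r : Fin d → ℝ)
    (hr : ∀ i, |A i ⬝ᵥ r| ≤ 1)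
    (p : Fin k → ℝ) (hp_nonneg : ∀ i, 0 ≤ p i) (hp_le : ∀ i, p i ≤ 1)
    (hp_sum : ∑ i, p i = 1)
    (Q : Matrix (Fin d) (Fin d) ℝ)
    (hQ : Q = Aᵀ * Matrix.diagonal p * A)
    (hQinv : IsUnit Q.det) :
    (Aᵀ * (Matrix.diagonal p - Matrix.vecMulVec p p) * A *
        ((∑ i, (p i * (A i ⬝ᵥ r) ^ 2) •
            Matrix.vecMulVec (Q⁻¹ *ᵥ A i) (Q⁻¹ *ᵥ A i)) -
          Matrix.vecMulVec r r)).trace ≤ d := by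
  set B := Aᵀ * (Matrix.diagonal p - Matrix.vecMulVec p p) * A with hB
  set c : Fin k → ℝ := fun i => A i ⬝ᵥ r with hc
  set u : Fin k → Fin d → ℝ := fun i => Q⁻¹ *ᵥ A i with hu
  -- step 1: trace as a scalar expression
  have htrace : (B * ((∑ i, (p i * c i ^ 2) • Matrix.vecMulVec (u i) (u i)) -
      Matrix.vecMulVec r r)).trace =
      (∑ j, p j * c j ^ 2 * (u j ⬝ᵥ (B *ᵥ u j))) - r ⬝ᵥ (B *ᵥ r) := by
    rw [Matrix.mul_sub, Matrix.trace_sub, Finset.mul_sum, Matrix.trace_sum]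
    rw [trace_mul_vecMulVec]
    congr 1
    refine Finset.sum_congr rfl fun j _ => ?_
    rw [Matrix.mul_smul, Matrix.trace_smul, trace_mul_vecMulVec, smul_eq_mul]
  rw [htrace]
  have hQu : ∀ j, Q *ᵥ u j = A j := by
    intro j
    rw [hu]
    show Q *ᵥ (Q⁻¹ *ᵥ A j) = A j
    rw [Matrix.mulVec_mulVec, Matrix.mul_nonsing_inv _ hQinv, Matrix.one_mulVec]
  have hI1 : ∀ j, ∑ i, p i * (A i ⬝ᵥ u j) ^ 2 = A j ⬝ᵥ u j := by
    intro j
    have h := quadformD A p (u j)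
    rw [← hQ, hQu j] at h
    rw [← h, dotProduct_comm]
  have hQapp : ∀ m n : Fin d, Q n m = ∑ j, p j * (A j n * A j m) := by
    intro m n
    rw [hQ, Matrix.mul_apply]
    refine Finset.sum_congr rfl fun j _ => ?_
    rw [Matrix.mul_diagonal, Matrix.transpose_apply]
    ring
  have hI2 : ∑ j, p j * (A j ⬝ᵥ u j) = (d : ℝ) := by
    have key : ∑ j, p j * (A j ⬝ᵥ u j) = ∑ m, ∑ n, Q⁻¹ m n * Q n m := by
      simp only [hu, dotProduct, Matrix.mulVec, dotProduct, hQapp, Finset.mul_sum]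
      rw [Finset.sum_comm]
      refine Finset.sum_congr rfl fun m _ => ?_
      rw [Finset.sum_comm]
      refine Finset.sum_congr rfl fun n _ => ?_
      refine Finset.sum_congr rfl fun j _ => ?_
      ring
    have htr : (Q⁻¹ * Q).trace = (d : ℝ) := by
      rw [Matrix.nonsing_inv_mul _ hQinv, Matrix.trace_one]
      simp
    rw [key, ← htr]
    simp [trace, Matrix.mul_apply]
  -- quadratic forms
  simp only [hB, quadform]
  have hv : ∀ j, 0 ≤ A j ⬝ᵥ u j := fun j =>
    (hI1 j) ▸ Finset.sum_nonneg (fun i _ => mul_nonneg (hp_nonneg i) (sq_nonneg _))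
  have hc1 : ∀ j, c j ^ 2 ≤ 1 := by
    intro j
    have h := hr j
    nlinarith [sq_abs (c j), abs_nonneg (c j)]
  have hcs : (∑ i, p i * c i) ^ 2 ≤ ∑ i, p i * c i ^ 2 := by
    have h := Finset.sum_sq_le_sum_mul_sum_of_sq_eq_mul (Finset.univ : Finset (Fin k))
      (r := fun i => p i * c i) (f := p) (g := fun i => p i * c i ^ 2)
      (fun i _ => hp_nonneg i) (fun i _ => mul_nonneg (hp_nonneg i) (sq_nonneg _))
      (fun i _ => by ring)
    rwa [hp_sum, one_mul] at h
  have hmain : ∑ j, p j * c j ^ 2 *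
      ((∑ i, p i * (A i ⬝ᵥ u j) ^ 2) - (∑ i, p i * (A i ⬝ᵥ u j)) ^ 2) ≤
      ∑ j, p j * (A j ⬝ᵥ u j) := by
    refine Finset.sum_le_sum fun j _ => ?_
    rw [hI1 j]
    nlinarith [hv j, hp_nonneg j, hc1 j, sq_nonneg (c j), sq_nonneg (∑ i, p i * (A i ⬝ᵥ u j)),
      mul_nonneg (mul_nonneg (hp_nonneg j) (sq_nonneg (c j)))
        (sq_nonneg (∑ i, p i * (A i ⬝ᵥ u j))),
      mul_nonneg (mul_nonneg (hp_nonneg j) (by nlinarith [hc1 j] : (0:ℝ) ≤ 1 - c j ^ 2)) (hv j)]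
  linarith [hmain, hI2, hcs]
end
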